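/- arXiv:1903.07442 — 6 statements merged into one kernel-verified Lean document; each statement's English description precedes it below -/
import Mathlib

section
/- Let p be a prime and let a, b be positive integers with p^a - 1 ≤ p^b - 1 ≤ (p^a - 1)^2 (i.e., s ≤ t ≤ s^2 where s = p^a - 1 and t = p^b - 1, with s > 1), and suppose s + t divides st(s+1)(t+1). Then a = b (equivalently s = t). -/
/-!
Write `s = p ^ a - 1`, `t = p ^ b - 1`, so `s + t + 2 = p ^ a + p ^ b` is divisible by
`q = p ^ min a b > 2`. A power of `p` dividing `s + t` either divides `q`, hence `2`, or is divisible
by `q`, which would then divide `2`; so the `p`-part of `s + t` divides `2`, and `s + t ∣ 2 s t`.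
With `g = gcd s t`, the number `(s + t) / g` is coprime to `s t / g ^ 2`, so it divides `2 g` and
`s + t ≤ 2 g ^ 2`. But `g = p ^ gcd a b - 1`, and if `a < b < 2 a` then `gcd a b ≤ b - a` gives
`2 g ^ 2 < p ^ b ≤ s + t`.
-/

namespace Nat

theorem gcd_pow_sub_one_add_pow_sub_one_pow_dvd_two {p a b : ℕ} (hp : p.Prime)
    (ha : 2 < p ^ a) (hb : 2 < p ^ b) (k : ℕ) :
    gcd (p ^ a - 1 + (p ^ b - 1)) (p ^ k) ∣ 2 := by
  set d := p ^ a - 1 + (p ^ b - 1)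
  have hd : d + 2 = p ^ a + p ^ b := by omega
  have hmin : p ^ min a b ∣ d + 2 :=
    hd ▸ dvd_add (pow_dvd_pow p (min_le_left a b)) (pow_dvd_pow p (min_le_right a b))
  obtain ⟨j, -, hj⟩ := (dvd_prime_pow hp).1 (gcd_dvd_right d (p ^ k))
  have hjd : p ^ j ∣ d := hj ▸ gcd_dvd_left d (p ^ k)
  rw [hj]
  rcases le_total j (min a b) with hjc | hcj
  · exact (Nat.dvd_add_right hjd).1 ((pow_dvd_pow p hjc).trans hmin)
  · have h2 := le_of_dvd two_pos ((Nat.dvd_add_right ((pow_dvd_pow p hcj).trans hjd)).1 hmin)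
    rcases min_choice a b with h | h <;> rw [h] at h2 <;> omega

theorem pow_sub_one_add_pow_sub_one_dvd_two_mul {p a b n : ℕ} (hp : p.Prime)
    (ha : 2 < p ^ a) (hb : 2 < p ^ b) (h : p ^ a - 1 + (p ^ b - 1) ∣ n * p ^ a * p ^ b) :
    p ^ a - 1 + (p ^ b - 1) ∣ 2 * n := by
  rw [mul_assoc, ← pow_add, mul_comm, ← dvd_gcd_mul_iff_dvd_mul] at h
  exact h.trans (mul_dvd_mul_right (gcd_pow_sub_one_add_pow_sub_one_pow_dvd_two hp ha hb _) n)

theorem add_le_mul_gcd_sq_of_add_dvd_mul_mul {s t k : ℕ} (hk : 0 < k) (hs : 0 < s)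
    (h : s + t ∣ k * (s * t)) : s + t ≤ k * gcd s t ^ 2 := by
  obtain ⟨s', t', hcop, hs', ht'⟩ := exists_coprime s t
  set g := gcd s t
  have hg : 0 < g := gcd_pos_of_pos_left t hs
  have hst : s + t = (s' + t') * g := by rw [hs', ht', add_mul]
  have hcop' : Coprime (s' + t') (s' * t') :=
    (coprime_self_add_left.2 hcop.symm).mul_right (coprime_add_self_left.2 hcop)
  have hdvd : s' + t' ∣ k * g := by
    refine hcop'.dvd_of_dvd_mul_right (Nat.dvd_of_mul_dvd_mul_right hg ?_)
    rw [hst, hs', ht'] at h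
    convert h using 1
    ring
  calc s + t = (s' + t') * g := hst
    _ ≤ k * g * g := Nat.mul_le_mul_right g (le_of_dvd (by positivity) hdvd)
    _ = k * g ^ 2 := by ring

theorem lt_two_mul_of_pow_sub_one_le_sq {p a b : ℕ} (hp : 1 < p) (ha : 1 < p ^ a)
    (h : p ^ b - 1 ≤ (p ^ a - 1) ^ 2) : b < 2 * a := by
  rw [← pow_lt_pow_iff_right₀ hp, pow_mul']
  obtain ⟨x, hx⟩ : ∃ x, p ^ a = x + 1 := ⟨p ^ a - 1, by omega⟩
  rw [hx, Nat.add_sub_cancel] at h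
  rw [hx]
  have : p ^ b ≤ x ^ 2 + 1 := by omega
  nlinarith

theorem two_mul_gcd_lt_of_lt_of_lt_two_mul {a b : ℕ} (hab : a < b) (hba : b < 2 * a) :
    2 * gcd a b < b := by
  have : gcd a b ≤ b - a := by
    rw [← gcd_sub_self_right hab.le]
    exact le_of_dvd (by omega) (gcd_dvd_right _ _)
  omega

theorem two_mul_pow_sub_one_sq_lt_pow {p c b : ℕ} (hp : 2 ≤ p) (hc : 2 * c < b) :
    2 * (p ^ c - 1) ^ 2 < p ^ b := calc
  2 * (p ^ c - 1) ^ 2 < 2 * (p ^ c) ^ 2 := by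
    gcongr
    exact sub_lt (by positivity) one_pos
  _ ≤ p * (p ^ c) ^ 2 := by gcongr
  _ = p ^ (2 * c + 1) := by ring
  _ ≤ p ^ b := Nat.pow_le_pow_right (by omega) hc

end Nat

theorem stmt_2_general (p a b : ℕ) (hp : p.Prime)
    (hs : 1 < p ^ a - 1)
    (hst : p ^ a - 1 ≤ p ^ b - 1)
    (hts : p ^ b - 1 ≤ (p ^ a - 1) ^ 2)
    (hdiv : (p ^ a - 1) + (p ^ b - 1) ∣
      (p ^ a - 1) * (p ^ b - 1) * p ^ a * p ^ b) :
    a = b := by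
  have hab : a ≤ b := (pow_le_pow_iff_right₀ hp.one_lt).1 (by omega)
  have hba : b < 2 * a := Nat.lt_two_mul_of_pow_sub_one_le_sq hp.one_lt (by omega) hts
  by_contra hne
  have hc := Nat.two_mul_gcd_lt_of_lt_of_lt_two_mul (lt_of_le_of_ne hab hne) hba
  have hle : p ^ a - 1 + (p ^ b - 1) ≤ 2 * (p ^ Nat.gcd a b - 1) ^ 2 := by
    rw [← Nat.pow_sub_one_gcd_pow_sub_one]
    exact Nat.add_le_mul_gcd_sq_of_add_dvd_mul_mul two_pos (by omega)
      (Nat.pow_sub_one_add_pow_sub_one_dvd_two_mul hp (by omega) (by omega) hdiv)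
  have := Nat.two_mul_pow_sub_one_sq_lt_pow hp.two_le hc
  omega

theorem stmt_2 (p a b : ℕ) (hp : p.Prime) (ha : 0 < a) (hb : 0 < b)
    (hs : 1 < p ^ a - 1)
    (hst : p ^ a - 1 ≤ p ^ b - 1)
    (hts : p ^ b - 1 ≤ (p ^ a - 1) ^ 2)
    (hdiv : (p ^ a - 1) + (p ^ b - 1) ∣
      (p ^ a - 1) * (p ^ b - 1) * p ^ a * p ^ b) :
    a = b :=
  stmt_2_general p a b hp hs hst hts hdiv
end

section
/- For every prime power q ≥ 2 (indeed every integer q ≥ 2), q^3 + q^2 - 1 does not divide q^5(q^2+1)(q^3-1). -/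
/-! Division with remainder: `q^5 (q^2+1)(q^3-1) = (q^3+q^2-1) Q(q) - (3q^2+2q-3)`, so the divisor would
have to divide `3q^2+2q-3`. For `q ≥ 3` this is positive and smaller than `q^3+q^2-1`; for `q = 2` it
asks whether `11 ∣ 13`. -/

theorem dvd_iff_dvd_remainder (q : ℤ) :
    q ^ 3 + q ^ 2 - 1 ∣ q ^ 5 * (q ^ 2 + 1) * (q ^ 3 - 1) ↔
      q ^ 3 + q ^ 2 - 1 ∣ 3 * q ^ 2 + 2 * q - 3 := by
  have division : q ^ 5 * (q ^ 2 + 1) * (q ^ 3 - 1) =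
      (q ^ 3 + q ^ 2 - 1) * (q ^ 7 - q ^ 6 + 2 * q ^ 5 - 2 * q ^ 4 + q ^ 3 - 2 * q + 3) -
        (3 * q ^ 2 + 2 * q - 3) := by
    ring
  rw [division, dvd_sub_right (dvd_mul_right _ _)]

theorem not_dvd_remainder (q : ℤ) (hq : 2 ≤ q) :
    ¬ (q ^ 3 + q ^ 2 - 1 ∣ 3 * q ^ 2 + 2 * q - 3) := by
  obtain rfl | hq3 := hq.eq_or_lt
  · decide
  intro h
  have hpos : 0 < 3 * q ^ 2 + 2 * q - 3 := by nlinarith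
  have hlt : 3 * q ^ 2 + 2 * q - 3 < q ^ 3 + q ^ 2 - 1 := by nlinarith
  exact hlt.not_ge (Int.le_of_dvd hpos h)

theorem stmt_5 (q : ℤ) (hq : 2 ≤ q) :
    ¬ (q ^ 3 + q ^ 2 - 1 ∣ q ^ 5 * (q ^ 2 + 1) * (q ^ 3 - 1)) := by
  rw [dvd_iff_dvd_remainder]
  exact not_dvd_remainder q hq
end

section
/- For every integer q ≥ 2, q^3 + q^2 - 1 does not divide q^5(q^2 - 1)(q^3 + 1). -/
/-!
Polynomial division of `q⁵(q² - 1)(q³ + 1)` by `q³ + q² - 1` leaves the remainder `5q² - 3`,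
so a divisor would have to divide `5q² - 3`. For `q ≥ 4` that remainder is positive and smaller
than the divisor, and `q = 2, 3` are checked directly.
-/

theorem pow_five_mul_mul_eq_mul_add (q : ℤ) :
    q ^ 5 * (q ^ 2 - 1) * (q ^ 3 + 1) =
      (q ^ 3 + q ^ 2 - 1) * (q ^ 7 - q ^ 6 + 2 * q ^ 4 - 3 * q ^ 3 + 2 * q ^ 2 - 3) +
        (5 * q ^ 2 - 3) := by
  ring

theorem dvd_pow_five_mul_mul_iff (q : ℤ) :
    q ^ 3 + q ^ 2 - 1 ∣ q ^ 5 * (q ^ 2 - 1) * (q ^ 3 + 1) ↔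
      q ^ 3 + q ^ 2 - 1 ∣ 5 * q ^ 2 - 3 := by
  rw [pow_five_mul_mul_eq_mul_add, dvd_add_right (dvd_mul_right _ _)]

theorem not_dvd_five_mul_sq_sub_three {q : ℤ} (hq : 4 ≤ q) :
    ¬ (q ^ 3 + q ^ 2 - 1 ∣ 5 * q ^ 2 - 3) := by
  intro h
  have hpos : 0 < 5 * q ^ 2 - 3 := by nlinarith
  have hlt : 5 * q ^ 2 - 3 < q ^ 3 + q ^ 2 - 1 := by nlinarith
  exact (Int.le_of_dvd hpos h).not_gt hlt

theorem stmt_6 (q : ℤ) (hq : 2 ≤ q) :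
    ¬ (q ^ 3 + q ^ 2 - 1 ∣ q ^ 5 * (q ^ 2 - 1) * (q ^ 3 + 1)) := by
  rw [dvd_pow_five_mul_mul_iff]
  obtain rfl | rfl | hq : q = 2 ∨ q = 3 ∨ 4 ≤ q := by omega
  · decide
  · decide
  · exact not_dvd_five_mul_sq_sub_three hq
end

section
/- For every integer q ≥ 2, q^4 + q^3 - 1 does not divide q^7(q^4 - 1)(q^3 + 1). -/
/-!
Modulo `q ^ 4 + q ^ 3 - 1` we have `q ^ 4 ≡ 1 - q ^ 3`, and reducing `q ^ 7 (q ^ 4 - 1) (q ^ 3 + 1)`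
with this leaves the remainder `9 q ^ 3 - 3 q ^ 2 + 4 q - 6`. For `q ≥ 8` that remainder is positive
and smaller than the modulus, so it cannot be a multiple of it; the cases `2 ≤ q ≤ 7` are checked
directly.
-/

theorem quartic_dvd_remainder_of_dvd {R : Type*} [CommRing R] {q : R}
    (h : q ^ 4 + q ^ 3 - 1 ∣ q ^ 7 * (q ^ 4 - 1) * (q ^ 3 + 1)) :
    q ^ 4 + q ^ 3 - 1 ∣ 9 * q ^ 3 - 3 * q ^ 2 + 4 * q - 6 := by
  have division : 9 * q ^ 3 - 3 * q ^ 2 + 4 * q - 6 =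
      (q ^ 4 + q ^ 3 - 1) * (q ^ 10 - q ^ 9 + q ^ 8 - q ^ 5 + 2 * q ^ 4 - 3 * q ^ 3
        + 3 * q ^ 2 - 4 * q + 6) - q ^ 7 * (q ^ 4 - 1) * (q ^ 3 + 1) := by ring
  rw [division]
  exact dvd_sub (dvd_mul_right _ _) h

theorem quartic_not_dvd_remainder {q : ℤ} (hq : 8 ≤ q) :
    ¬ (q ^ 4 + q ^ 3 - 1 ∣ 9 * q ^ 3 - 3 * q ^ 2 + 4 * q - 6) := by
  intro h
  have hpos : 0 < 9 * q ^ 3 - 3 * q ^ 2 + 4 * q - 6 := by nlinarith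
  have hle := Int.le_of_dvd hpos h
  nlinarith

theorem stmt_7 (q : ℤ) (hq : 2 ≤ q) :
    ¬ (q ^ 4 + q ^ 3 - 1 ∣ q ^ 7 * (q ^ 4 - 1) * (q ^ 3 + 1)) := by
  intro h
  rcases le_or_gt q 7 with hsmall | hlarge
  · interval_cases q <;> norm_num at h
  · exact quartic_not_dvd_remainder hlarge (quartic_dvd_remainder_of_dvd h)
end

section
/- For every integer q ≥ 2, q^5 + q^3 - 1 does not divide q^8(q^5 - 1)(q^3 + 1). -/
/-! Modulo `q⁵ + q³ - 1` the product `q⁸(q⁵ - 1)(q³ + 1)` reduces to `(q + 1)(2q³ + q² - 2)`.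
For `q ≥ 3` this remainder lies strictly between `0` and `q⁵ + q³ - 1`, so it is not a multiple
of it; for `q = 2` the divisor is `39` and the remainder `54`. -/

theorem pow_eight_mul_sub_one_mul_add_one_eq {R : Type*} [CommRing R] (q : R) :
    q ^ 8 * (q ^ 5 - 1) * (q ^ 3 + 1) =
      (q ^ 5 + q ^ 3 - 1) * (q ^ 11 - q ^ 9 + q ^ 8 + q ^ 7 - q ^ 6 - q ^ 5 + q ^ 3 + q ^ 2 - 2 * q - 2)
        + (q + 1) * (2 * q ^ 3 + q ^ 2 - 2) := by
  ring

theorem dvd_pow_eight_mul_iff_dvd_remainder {R : Type*} [CommRing R] (q : R) :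
    q ^ 5 + q ^ 3 - 1 ∣ q ^ 8 * (q ^ 5 - 1) * (q ^ 3 + 1) ↔
      q ^ 5 + q ^ 3 - 1 ∣ (q + 1) * (2 * q ^ 3 + q ^ 2 - 2) := by
  rw [pow_eight_mul_sub_one_mul_add_one_eq]
  exact dvd_add_right (dvd_mul_right _ _)

section Bounds

variable {R : Type*} [CommRing R] [LinearOrder R] [IsStrictOrderedRing R] {q : R}

theorem remainder_pos (hq : 1 ≤ q) : 0 < (q + 1) * (2 * q ^ 3 + q ^ 2 - 2) := by
  have hq3 : 1 ≤ q ^ 3 := one_le_pow₀ hq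
  have hq2 : 1 ≤ q ^ 2 := one_le_pow₀ hq
  apply mul_pos <;> linarith

theorem remainder_lt_divisor (hq : 3 ≤ q) :
    (q + 1) * (2 * q ^ 3 + q ^ 2 - 2) < q ^ 5 + q ^ 3 - 1 := by
  have step (n : ℕ) : 3 * q ^ n ≤ q ^ (n + 1) := by
    rw [pow_succ, mul_comm]
    exact mul_le_mul_of_nonneg_left hq (pow_nonneg (by linarith) n)
  have h3 : 3 * q ^ 2 ≤ q ^ 3 := step 2
  have h4 : 3 * q ^ 3 ≤ q ^ 4 := step 3
  have h5 : 3 * q ^ 4 ≤ q ^ 5 := step 4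
  linarith [sq_nonneg q]

end Bounds

theorem stmt_8 (q : ℤ) (hq : 2 ≤ q) :
    ¬ (q ^ 5 + q ^ 3 - 1 ∣ q ^ 8 * (q ^ 5 - 1) * (q ^ 3 + 1)) := by
  rw [dvd_pow_eight_mul_iff_dvd_remainder]
  obtain rfl | hq3 := hq.eq_or_lt
  · decide
  intro h
  have hpos := remainder_pos (q := q) (by omega)
  exact hpos.ne' (Int.eq_zero_of_dvd_of_nonneg_of_lt hpos.le (remainder_lt_divisor hq3) h)
end

section
/- Let s, t be integers with 1 < s < t, and suppose positive integers b, x, j, n satisfy: n(xt + 1) = (s+1)(st+1), bs = xt, and n = jt + (s+1) with j ≥ 0. Then x = s (hence the block size bs + 1 equals st + 1). -/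
/-!
Subtracting the count `n = j t + (s + 1)` from `n (x t + 1) = (s + 1)(s t + 1)` and cancelling `t`
leaves `j (x t + 1) = (s + 1)(s - x)`, so `x ≤ s`. If `x < s`, then `x t + 1 > s + 1` forces
`j < s - x`. On the other hand, rewriting `x t = b s` gives `j + x = s (s - x + 1 - j b)`, so `s`
divides the positive number `j + x` and `s - x ≤ j`.
-/

theorem mul_sub_eq_of_card_eq {R : Type*} [CommRing R] [IsDomain R] {s t x j n : R} (ht : t ≠ 0)
    (hcard : n * (x * t + 1) = (s + 1) * (s * t + 1)) (hn : n = j * t + (s + 1)) :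
    j * (x * t + 1) = (s + 1) * (s - x) := by
  subst hn
  exact mul_left_cancel₀ ht (by linear_combination hcard)

section BlockEquation

variable {s t x j : ℤ}

theorem le_of_mul_add_one_eq (hs : 0 < s) (ht : 0 < t) (hx : 0 < x) (hj : 0 ≤ j)
    (h : j * (x * t + 1) = (s + 1) * (s - x)) : x ≤ s := by
  nlinarith [mul_pos hx ht]

theorem lt_sub_of_mul_add_one_eq (hst : s < t) (hx : 0 < x) (hj : 0 ≤ j) (hxs : x < s)
    (h : j * (x * t + 1) = (s + 1) * (s - x)) : j < s - x := by
  have hxt : s + 1 < x * t + 1 := by nlinarith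
  nlinarith

theorem sub_le_of_mul_add_one_eq {b : ℤ} (hx : 0 < x) (hj : 0 ≤ j)
    (h : j * (b * s + 1) = (s + 1) * (s - x)) : s - x ≤ j := by
  have hdvd : s ∣ j + x := ⟨s - x + 1 - j * b, by linear_combination h⟩
  linarith [Int.le_of_dvd (by linarith) hdvd]

end BlockEquation

theorem stmt_12_general (s t b x j n : ℤ) (hs : 1 < s) (hst : s < t)
    (hx : 0 < x) (hj : 0 ≤ j)
    (h1 : n * (x * t + 1) = (s + 1) * (s * t + 1))
    (h2 : b * s = x * t)
    (h3 : n = j * t + (s + 1)) :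
    x = s := by
  have hs0 : 0 < s := by linarith
  have ht : 0 < t := by linarith
  have hblock := mul_sub_eq_of_card_eq ht.ne' h1 h3
  have hxs : x ≤ s := le_of_mul_add_one_eq hs0 ht hx hj hblock
  by_contra hne
  have hlt := lt_sub_of_mul_add_one_eq hst hx hj (lt_of_le_of_ne hxs hne) hblock
  have hge := sub_le_of_mul_add_one_eq hx hj (h2 ▸ hblock)
  omega

theorem stmt_12 (s t b x j n : ℤ) (hs : 1 < s) (hst : s < t)
    (hb : 0 < b) (hx : 0 < x) (hn : 0 < n) (hj : 0 ≤ j)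
    (h1 : n * (x * t + 1) = (s + 1) * (s * t + 1))
    (h2 : b * s = x * t)
    (h3 : n = j * t + (s + 1)) :
    x = s :=
  stmt_12_general s t b x j n hs hst hx hj h1 h2 h3
end
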